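/- arXiv:1108.5221 — 3 statements merged into one kernel-verified Lean document; each statement's English description precedes it below -/
import Mathlib

section
/- For all s in (0,1), the function β(s) := 3 + 4s + (4s - 3)e^{2s} - 2s e^{s} is strictly positive. -/
theorem stmt_1 (s : ℝ) (hs : s ∈ Set.Ioo (0:ℝ) 1) :
    0 < 3 + 4*s + (4*s - 3) * Real.exp (2*s) - 2*s * Real.exp s := by
  obtain ⟨h0, h1⟩ := hs
  have hp : 1 + s + s^2/2 + s^3/6 ≤ Real.exp s := by
    have h := Real.sum_le_exp_of_nonneg h0.le 4
    norm_num [Finset.sum_range_succ, Nat.factorial] at h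
    linarith
  have hq : Real.exp s ≤ 1 + s + s^2/2 + s^3/6 + 5/96*s^4 := by
    have h := Real.exp_bound' h0.le h1.le (n := 4) (by norm_num)
    norm_num [Finset.sum_range_succ, Nat.factorial] at h
    linarith
  have h2s : Real.exp (2*s) = (Real.exp s)^2 := by
    rw [two_mul, Real.exp_add, sq]
  rw [h2s]
  rcases le_or_gt (3/4) s with hc | hc
  · nlinarith [hp, hq, Real.exp_pos s, sq_nonneg (s - 3/4), sq_nonneg s]
  · have hsq : Real.exp s * Real.exp s ≤
        (1 + s + s^2/2 + s^3/6 + 5/96*s^4) * (1 + s + s^2/2 + s^3/6 + 5/96*s^4) :=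
      mul_le_mul hq hq (Real.exp_pos s).le (by nlinarith)
    have hA := mul_nonneg (by linarith : (0:ℝ) ≤ 3 - 4*s) (sub_nonneg.2 hsq)
    have hB := mul_nonneg (by linarith : (0:ℝ) ≤ 2*s) (sub_nonneg.2 hq)
    nlinarith [hA, hB, pow_pos h0 3, pow_pos h0 4, pow_pos h0 5, pow_pos h0 6,
      pow_pos h0 7, pow_pos h0 8, pow_pos h0 9]
end

section
/- For all s in (0,1), with r1 = 2 + 4s - 2e^s s + 4e^{2s} s - 2e^{3s} s + e^{4s}(4s - 2), r2 = -1 + e^{4s} - 4e^{2s} s, r3 = 2 + 4s - 4e^s s + e^{2s}(4s - 2), r4 = -1 + e^{2s} - 2e^s s, one has r3·r2 - r1·r4 = 2e^s(e^s - 1)^2 s (3 + 4s + (4s - 3)e^{2s} - 2s e^s), and this quantity is strictly positive. -/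
set_option maxHeartbeats 800000 in
theorem stmt_6 (s : ℝ) (hs : s ∈ Set.Ioo (0:ℝ) 1)
    (r1 r2 r3 r4 : ℝ)
    (hr1 : r1 = 2 + 4*s - 2*Real.exp s * s + 4*Real.exp (2*s) * s - 2*Real.exp (3*s) * s
      + Real.exp (4*s) * (4*s - 2))
    (hr2 : r2 = -1 + Real.exp (4*s) - 4*Real.exp (2*s) * s)
    (hr3 : r3 = 2 + 4*s - 4*Real.exp s * s + Real.exp (2*s) * (4*s - 2))
    (hr4 : r4 = -1 + Real.exp (2*s) - 2*Real.exp s * s) :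
    r3 * r2 - r1 * r4 =
      2 * Real.exp s * (Real.exp s - 1)^2 * s *
        (3 + 4*s + (4*s - 3) * Real.exp (2*s) - 2*s * Real.exp s) ∧
    0 < r3 * r2 - r1 * r4 := by
  obtain ⟨hs0, hs1⟩ := hs
  have hE : Real.exp s = Real.exp s := rfl
  set E := Real.exp s with hEdef
  have h2 : Real.exp (2*s) = E^2 := by
    rw [hEdef, ← Real.exp_nat_mul]; norm_num
  have h3 : Real.exp (3*s) = E^3 := by
    rw [hEdef, ← Real.exp_nat_mul]; norm_num
  have h4 : Real.exp (4*s) = E^4 := by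
    rw [hEdef, ← Real.exp_nat_mul]; norm_num
  have hid : r3 * r2 - r1 * r4 =
      2 * E * (E - 1)^2 * s * (3 + 4*s + (4*s - 3) * E^2 - 2*s*E) := by
    subst hr1 hr2 hr3 hr4
    rw [h2, h3, h4]; ring
  refine ⟨by rw [hid, h2], ?_⟩
  rw [hid]
  have hEpos : 0 < E := Real.exp_pos s
  have hlb : 1 + s < E := by
    have := Real.add_one_lt_exp (x := s) (by positivity)
    linarith
  have hub : E ≤ 1 + s + s^2/2 + s^3/4 := by
    have hb := Real.exp_bound (x := s) (by rw [abs_of_pos hs0]; linarith) (n := 3) (by norm_num)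
    have hsum : ∑ i ∈ Finset.range 3, s ^ i / (Nat.factorial i : ℝ) = 1 + s + s^2/2 := by
      norm_num [Finset.sum_range_succ, Nat.factorial]
    rw [hsum, abs_of_pos hs0] at hb
    have h3' : s^3 * ((3:ℕ).succ / ((Nat.factorial 3 : ℝ) * 3)) ≤ s^3 / 4 := by
      rw [show (((3:ℕ).succ : ℝ) / ((Nat.factorial 3 : ℝ) * 3)) = 2/9 by
        norm_num [Nat.factorial]]
      nlinarith [pow_pos hs0 3]
    have := abs_le.mp hb
    linarith [this.2]
  have hbE : 0 ≤ 1 + s + s^2/2 + s^3/4 - E := by linarith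
  have hkey : 0 < 3 + 4*s + (4*s - 3) * E^2 - 2*s*E := by
    rcases lt_or_ge s (3/4) with hcase | hcase
    · have c1 : 0 ≤ (3-4*s)*((1 + s + s^2/2 + s^3/4-E)*(E-(1+s))) :=
        mul_nonneg (by linarith) (mul_nonneg hbE (by linarith))
      have c2 : 0 ≤ (2*s+(3-4*s)*((1+s)+(1 + s + s^2/2 + s^3/4)))*(1 + s + s^2/2 + s^3/4-E) := by
        apply mul_nonneg _ hbE
        nlinarith [pow_pos hs0 2, pow_pos hs0 3]
      nlinarith [c1, c2, pow_pos hs0 3, pow_pos hs0 4, pow_pos hs0 5,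
        pow_pos hs0 6, pow_pos hs0 7]
    · have c1 : 0 ≤ (4*s-3)*E^2 := mul_nonneg (by linarith) (sq_nonneg E)
      have c2 : 0 ≤ 2*s*(1 + s + s^2/2 + s^3/4-E) := mul_nonneg (by linarith) hbE
      nlinarith [c1, c2, pow_pos hs0 2, pow_pos hs0 3, pow_pos hs0 4]
  have hE1 : 0 < (E - 1)^2 := pow_pos (by linarith) 2
  exact mul_pos (mul_pos (mul_pos (by positivity) hE1) hs0) hkey
end

section
/- Let f ∈ C^2[-1,1] and define h = a_{-1}δ_{-1} + a_0 δ_1 + g where a_{-1} = (f(-1) - f'(-1))/2, a_0 = (f'(1) + f(1))/2, and g(x) = (f(x) - f''(x))/2, with δ_{±1} the Dirac deltas at ∓1 and 1. Then for every x ∈ [-1,1], ∫_{-1}^1 e^{-|x-y|} dh(y) = a_{-1} e^{-(x+1)} + a_0 e^{-(1-x)} + ∫_{-1}^1 e^{-|x-y|} g(y) dy = f(x). -/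
/-! On `[a, x]` the function `e^{y-x} (f - f')(y)` and on `[x, b]` the function
`-e^{x-y} (f + f')(y)` are antiderivatives of `e^{-|x-y|} (f - f'')(y)`. By the fundamental
theorem of calculus the kernel integral of `(f - f'')/2` is `f x` minus the two boundary terms
`e^{a-x} (f - f')(a)/2` and `e^{x-b} (f + f')(b)/2`, which are exactly the point masses. -/

open Set Real MeasureTheory

section ExpKernel

variable {f f' f'' : ℝ → ℝ}

theorem integral_exp_mul_sub_of_hasDerivAt_left {a x : ℝ}
    (hf' : ∀ y ∈ uIcc a x, HasDerivAt f (f' y) y)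
    (hf'' : ∀ y ∈ uIcc a x, HasDerivAt f' (f'' y) y)
    (hint : IntervalIntegrable f'' volume a x) :
    ∫ y in a..x, exp (y - x) * (f y - f'' y) = f x - f' x - exp (a - x) * (f a - f' a) := by
  have hderiv : ∀ y ∈ uIcc a x, HasDerivAt (fun y => exp (y - x) * (f y - f' y))
      (exp (y - x) * (f y - f'' y)) y := by
    intro y hy
    have hexp : HasDerivAt (fun y => exp (y - x)) (exp (y - x)) y := by
      simpa using ((hasDerivAt_id y).sub_const x).exp
    have hdiff : HasDerivAt (fun y => f y - f' y) (f' y - f'' y) y := (hf' y hy).sub (hf'' y hy)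
    exact (hexp.mul hdiff).congr_deriv (by ring)
  have hcont_exp : ContinuousOn (fun y => exp (y - x)) (uIcc a x) := by fun_prop
  have hintegrable := (((HasDerivAt.continuousOn hf').intervalIntegrable).sub hint).continuousOn_mul
    hcont_exp
  rw [intervalIntegral.integral_eq_sub_of_hasDerivAt hderiv hintegrable, sub_self, exp_zero,
    one_mul]

theorem integral_exp_mul_sub_of_hasDerivAt_right {x b : ℝ}
    (hf' : ∀ y ∈ uIcc x b, HasDerivAt f (f' y) y)
    (hf'' : ∀ y ∈ uIcc x b, HasDerivAt f' (f'' y) y)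
    (hint : IntervalIntegrable f'' volume x b) :
    ∫ y in x..b, exp (x - y) * (f y - f'' y) = f x + f' x - exp (x - b) * (f b + f' b) := by
  have hderiv : ∀ y ∈ uIcc x b, HasDerivAt (fun y => -(exp (x - y) * (f y + f' y)))
      (exp (x - y) * (f y - f'' y)) y := by
    intro y hy
    have hexp : HasDerivAt (fun y => exp (x - y)) (-exp (x - y)) y := by
      simpa using ((hasDerivAt_id y).const_sub x).exp
    have hsum : HasDerivAt (fun y => f y + f' y) (f' y + f'' y) y := (hf' y hy).add (hf'' y hy)
    exact (hexp.mul hsum).neg.congr_deriv (by ring)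
  have hcont_exp : ContinuousOn (fun y => exp (x - y)) (uIcc x b) := by fun_prop
  have hintegrable := (((HasDerivAt.continuousOn hf').intervalIntegrable).sub hint).continuousOn_mul
    hcont_exp
  rw [intervalIntegral.integral_eq_sub_of_hasDerivAt hderiv hintegrable, sub_self, exp_zero]
  ring

theorem integral_exp_neg_abs_sub_mul {φ : ℝ → ℝ} {a b x : ℝ} (hx : x ∈ Icc a b)
    (hφ : IntervalIntegrable φ volume a b) :
    ∫ y in a..b, exp (-|x - y|) * φ y
      = (∫ y in a..x, exp (y - x) * φ y) + ∫ y in x..b, exp (x - y) * φ y := by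
  have hint : IntervalIntegrable (fun y => exp (-|x - y|) * φ y) volume a b :=
    hφ.continuousOn_mul (by fun_prop)
  have hleft : ∫ y in a..x, exp (-|x - y|) * φ y = ∫ y in a..x, exp (y - x) * φ y := by
    refine intervalIntegral.integral_congr fun y hy => ?_
    rw [uIcc_of_le hx.1] at hy
    simp only [abs_of_nonneg (sub_nonneg.2 hy.2), neg_sub]
  have hright : ∫ y in x..b, exp (-|x - y|) * φ y = ∫ y in x..b, exp (x - y) * φ y := by
    refine intervalIntegral.integral_congr fun y hy => ?_
    rw [uIcc_of_le hx.2] at hy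
    simp only [abs_of_nonpos (sub_nonpos.2 hy.1), neg_neg]
  rw [← hleft, ← hright, intervalIntegral.integral_add_adjacent_intervals
    (hint.mono_set (uIcc_subset_uIcc_left (mem_uIcc_of_le hx.1 hx.2)))
    (hint.mono_set (uIcc_subset_uIcc_right (mem_uIcc_of_le hx.1 hx.2)))]

theorem exp_kernel_representation {a b x : ℝ}
    (hf' : ∀ y ∈ Icc a b, HasDerivAt f (f' y) y)
    (hf'' : ∀ y ∈ Icc a b, HasDerivAt f' (f'' y) y)
    (hint : IntervalIntegrable f'' volume a b) (hx : x ∈ Icc a b) :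
    (f a - f' a) / 2 * exp (a - x) + (f b + f' b) / 2 * exp (x - b)
      + ∫ y in a..b, exp (-|x - y|) * ((f y - f'' y) / 2) = f x := by
  have hab : a ≤ b := hx.1.trans hx.2
  have hleft : uIcc a x ⊆ Icc a b := uIcc_subset_Icc (left_mem_Icc.2 hab) hx
  have hright : uIcc x b ⊆ Icc a b := uIcc_subset_Icc hx (right_mem_Icc.2 hab)
  have hIcc : uIcc a b = Icc a b := uIcc_of_le hab
  have hφ : IntervalIntegrable (fun y => f y - f'' y) volume a b :=
    (HasDerivAt.continuousOn hf').intervalIntegrable_of_Icc hab |>.sub hint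
  simp_rw [← mul_div_assoc, intervalIntegral.integral_div]
  rw [integral_exp_neg_abs_sub_mul hx hφ,
    integral_exp_mul_sub_of_hasDerivAt_left (fun y hy => hf' y (hleft hy))
      (fun y hy => hf'' y (hleft hy)) (hint.mono_set (hIcc ▸ hleft)),
    integral_exp_mul_sub_of_hasDerivAt_right (fun y hy => hf' y (hright hy))
      (fun y hy => hf'' y (hright hy)) (hint.mono_set (hIcc ▸ hright))]
  ring

end ExpKernel

theorem stmt_12 (f f' f'' : ℝ → ℝ)
    (hf' : ∀ x ∈ Set.Icc (-1:ℝ) 1, HasDerivAt f (f' x) x)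
    (hf'' : ∀ x ∈ Set.Icc (-1:ℝ) 1, HasDerivAt f' (f'' x) x)
    (hcont : ContinuousOn f'' (Set.Icc (-1:ℝ) 1))
    (am1 a0 : ℝ) (g : ℝ → ℝ)
    (ham1 : am1 = (f (-1) - f' (-1)) / 2)
    (ha0 : a0 = (f' 1 + f 1) / 2)
    (hg : ∀ x, g x = (f x - f'' x) / 2) :
    ∀ x ∈ Set.Icc (-1:ℝ) 1,
      am1 * Real.exp (-(x + 1)) + a0 * Real.exp (-(1 - x))
        + ∫ y in (-1:ℝ)..1, Real.exp (-|x - y|) * g y = f x := by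
  intro x hx
  obtain rfl : g = fun y => (f y - f'' y) / 2 := funext hg
  subst ham1 ha0
  rw [show -(x + 1) = -1 - x by ring, show -(1 - x) = x - 1 by ring, add_comm (f' 1)]
  exact exp_kernel_representation hf' hf''
    (hcont.intervalIntegrable_of_Icc (by norm_num)) hx
end
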